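/- Fix X ∈ ℝ^{n×p}, D ∈ ℝ^{m×p} and λ > 0. There is a set N ⊆ ℝⁿ of n-dimensional Lebesgue measure zero such that for every y ∉ N the following holds: if null(X) ∩ null(D_{−B}) = {0} for every boundary set B associated with an optimal subgradient of the generalized lasso problem, then the subspace null(D_{−B}) is the same for all such boundary sets B, and the generalized lasso solution is unique. -/

import Mathlib

open Matrix

/-- The generalized lasso criterion `f(β) = (1/2)‖y − Xβ‖₂² + λ‖Dβ‖₁`. -/
noncomputable def glCrit (n p m : ℕ) (y : Fin n → ℝ) (X : Matrix (Fin n) (Fin p) ℝ)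
    (D : Matrix (Fin m) (Fin p) ℝ) (lam : ℝ) (β : Fin p → ℝ) : ℝ :=
  (1 / 2) * ∑ i, (y i - X.mulVec β i) ^ 2 + lam * ∑ i, |D.mulVec β i|

/-- A solution of the generalized lasso problem: a global minimizer. -/
def IsGLSol (n p m : ℕ) (y : Fin n → ℝ) (X : Matrix (Fin n) (Fin p) ℝ)
    (D : Matrix (Fin m) (Fin p) ℝ) (lam : ℝ) (β : Fin p → ℝ) : Prop :=
  ∀ β' : Fin p → ℝ, glCrit n p m y X D lam β ≤ glCrit n p m y X D lam β'


/-- `γ̂` is an optimal subgradient: together with some solution `β̂` it satisfies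
the KKT conditions `Xᵀ(y − Xβ̂) = λ Dᵀ γ̂`, with `γ̂ᵢ = sign((Dβ̂)ᵢ)` when
`(Dβ̂)ᵢ ≠ 0` and `γ̂ᵢ ∈ [−1,1]` when `(Dβ̂)ᵢ = 0`. -/
noncomputable def IsOptSubgrad (n p m : ℕ) (y : Fin n → ℝ) (X : Matrix (Fin n) (Fin p) ℝ)
    (D : Matrix (Fin m) (Fin p) ℝ) (lam : ℝ) (γ : Fin m → ℝ) : Prop :=
  ∃ β : Fin p → ℝ, IsGLSol n p m y X D lam β ∧
    X.transpose.mulVec (y - X.mulVec β) = lam • D.transpose.mulVec γ ∧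
    ∀ i : Fin m,
      (D.mulVec β i ≠ 0 → γ i = Real.sign (D.mulVec β i)) ∧
      (D.mulVec β i = 0 → γ i ∈ Set.Icc (-1 : ℝ) 1)

/-- The boundary set of a subgradient `γ`: coordinates achieving absolute value 1. -/
def boundarySet (m : ℕ) (γ : Fin m → ℝ) : Set (Fin m) := {i | |γ i| = 1}

/-- The null space of `D_{−B}`, i.e. `{β : (Dβ)ᵢ = 0 for all i ∉ B}`. -/
def nullDminus (m p : ℕ) (D : Matrix (Fin m) (Fin p) ℝ) (B : Set (Fin m)) :
    Set (Fin p → ℝ) :=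
  {β | ∀ i ∉ B, D.mulVec β i = 0}

/-!
Solutions exist because the criterion is a sum of coercive functions of `(Xβ, Dβ)`, and
strict convexity of the loss in `Xβ` gives all solutions the same fit `Xβ̂` and the same
penalty `‖Dβ̂‖₁`. At a solution, the one-sided directional derivatives of the criterion are
nonnegative; Hahn–Banach separation from the compact convex set `λ Dᵀ ∂‖·‖₁(Dβ̂)` turns this
into the KKT conditions. Pairing the KKT equation with solutions shows that an optimal
subgradient satisfies the KKT conditions with *every* solution, hence every solution lies in
`null(D_{−B})`; under the rank condition the solution is unique, and the optimal subgradients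
form a convex set.

For the invariance, let `B' ⊆ B` be boundary sets with `β̂ ∈ null(D_{−B'})` and suppose
`null(D_{−B'}) ⊊ null(D_{−B})`. Choose `v ∈ null(D_{−B})` with `Xv ≠ 0` and
`Xv ⊥ X null(D_{−B'})` (orthogonal projection, using injectivity of `X` on `null(D_{−B})`).
Pairing the KKT equation with `v` gives `⟨Xv, y⟩ = λ ∑_{i ∈ B} sign(γ̂ᵢ) (Dv)ᵢ`, so `y` lies on
one of finitely many hyperplanes, indexed by `B`, `B'` and a sign pattern. Off their union,
the null spaces of the boundary sets of two optimal subgradients both agree with that of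
their midpoint, whose boundary set is contained in both.
-/

open Filter Topology Set MeasureTheory

theorem Real.sign_mul_self (x : ℝ) : Real.sign x * x = |x| := by
  rcases lt_trichotomy x 0 with h | rfl | h
  · rw [Real.sign_of_neg h, abs_of_neg h]; ring
  · simp
  · rw [Real.sign_of_pos h, abs_of_pos h, one_mul]

theorem Real.abs_sign_of_ne_zero {x : ℝ} (hx : x ≠ 0) : |Real.sign x| = 1 := by
  rcases Real.sign_apply_eq_of_ne_zero x hx with h | h <;> simp [h]

theorem Real.abs_sign_le_one (x : ℝ) : |Real.sign x| ≤ 1 := by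
  rcases Real.sign_apply_eq x with h | h | h <;> simp [h]

section L1Subdifferential

variable {ι : Type*}

def l1Subdifferential (b : ι → ℝ) : Set (ι → ℝ) :=
  univ.pi fun i => if b i = 0 then Icc (-1) 1 else {Real.sign (b i)}

theorem mem_l1Subdifferential {b γ : ι → ℝ} :
    γ ∈ l1Subdifferential b ↔
      ∀ i, (b i ≠ 0 → γ i = Real.sign (b i)) ∧ (b i = 0 → γ i ∈ Icc (-1 : ℝ) 1) := by
  refine mem_univ_pi.trans (forall_congr' fun i => ?_)
  by_cases h : b i = 0 <;> simp [h]

theorem convex_l1Subdifferential (b : ι → ℝ) : Convex ℝ (l1Subdifferential b) :=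
  convex_pi fun i _ => by split_ifs; exacts [convex_Icc _ _, convex_singleton _]

theorem isCompact_l1Subdifferential (b : ι → ℝ) : IsCompact (l1Subdifferential b) :=
  isCompact_univ_pi fun i => by split_ifs; exacts [isCompact_Icc, isCompact_singleton]

theorem abs_le_one_of_mem_l1Subdifferential {b γ : ι → ℝ} (hγ : γ ∈ l1Subdifferential b)
    (i : ι) : |γ i| ≤ 1 := by
  by_cases h : b i = 0
  · exact abs_le.2 ((mem_l1Subdifferential.1 hγ i).2 h)
  · rw [(mem_l1Subdifferential.1 hγ i).1 h]
    exact Real.abs_sign_le_one _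

variable [Fintype ι]

theorem mem_l1Subdifferential_of_dotProduct_eq {b γ : ι → ℝ} (hγ : ∀ i, |γ i| ≤ 1)
    (h : γ ⬝ᵥ b = ∑ i, |b i|) : γ ∈ l1Subdifferential b := by
  have hle : ∀ i ∈ Finset.univ, γ i * b i ≤ |b i| := fun i _ =>
    calc γ i * b i ≤ |γ i| * |b i| := by rw [← abs_mul]; exact le_abs_self _
      _ ≤ |b i| := mul_le_of_le_one_left (abs_nonneg _) (hγ i)
  have heq := (Finset.sum_eq_sum_iff_of_le hle).1 h
  refine mem_l1Subdifferential.2 fun i => ⟨fun hb => ?_, fun _ => abs_le.1 (hγ i)⟩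
  have := heq i (Finset.mem_univ i)
  rw [← Real.sign_mul_self] at this
  exact mul_right_cancel₀ hb this

theorem dotProduct_eq_sum_abs_of_mem_l1Subdifferential {b γ : ι → ℝ}
    (hγ : γ ∈ l1Subdifferential b) : γ ⬝ᵥ b = ∑ i, |b i| :=
  Finset.sum_congr rfl fun i _ => by
    by_cases h : b i = 0
    · simp [h]
    · rw [(mem_l1Subdifferential.1 hγ i).1 h, Real.sign_mul_self]

noncomputable def l1DirectionalDeriv (b d : ι → ℝ) : ℝ :=
  ∑ i, if b i = 0 then |d i| else Real.sign (b i) * d i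

theorem exists_mem_l1Subdifferential_dotProduct_eq (b d : ι → ℝ) :
    ∃ γ ∈ l1Subdifferential b, γ ⬝ᵥ d = l1DirectionalDeriv b d := by
  refine ⟨fun i => if b i = 0 then Real.sign (d i) else Real.sign (b i), ?_, ?_⟩
  · refine mem_l1Subdifferential.2 fun i => ⟨fun h => if_neg h, fun h => ?_⟩
    rw [if_pos h]
    exact abs_le.1 (Real.abs_sign_le_one _)
  · refine Finset.sum_congr rfl fun i _ => ?_
    dsimp only
    split_ifs
    exacts [Real.sign_mul_self _, rfl]

theorem eventually_abs_add_mul_eq (b d : ℝ) :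
    ∀ᶠ t in 𝓝[>] (0 : ℝ), |b + t * d| = |b| + t * (if b = 0 then |d| else Real.sign b * d) := by
  have hcont : Tendsto (fun t => b + t * d) (𝓝[>] 0) (𝓝 b) := by
    refine Tendsto.mono_left ?_ nhdsWithin_le_nhds
    exact (continuous_const.add (continuous_id.mul continuous_const)).tendsto' _ _ (by simp)
  rcases lt_trichotomy b 0 with hb | rfl | hb
  · filter_upwards [hcont.eventually (gt_mem_nhds hb)] with t ht
    rw [abs_of_neg ht, abs_of_neg hb, if_neg hb.ne, Real.sign_of_neg hb]; ring
  · filter_upwards [self_mem_nhdsWithin] with t (ht : 0 < t)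
    simp [abs_mul, abs_of_pos ht]
  · filter_upwards [hcont.eventually (lt_mem_nhds hb)] with t ht
    rw [abs_of_pos ht, abs_of_pos hb, if_neg hb.ne', Real.sign_of_pos hb]; ring

theorem eventually_sum_abs_add_smul_eq (b d : ι → ℝ) :
    ∀ᶠ t in 𝓝[>] (0 : ℝ), ∑ i, |b i + t * d i| = ∑ i, |b i| + t * l1DirectionalDeriv b d := by
  filter_upwards [eventually_all.2 fun i => eventually_abs_add_mul_eq (b i) (d i)] with t ht
  simp only [ht, l1DirectionalDeriv, Finset.sum_add_distrib, Finset.mul_sum]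

end L1Subdifferential

theorem LinearMap.exists_forall_le_comp {E F : Type*} [AddCommGroup E] [Module ℝ E]
    [NormedAddCommGroup F] [NormedSpace ℝ F] [FiniteDimensional ℝ F] (T : E →ₗ[ℝ] F)
    {g : F → ℝ} (hg : Continuous g) (hlim : Tendsto g (cocompact F) atTop) :
    ∃ x, ∀ x', g (T x) ≤ g (T x') := by
  have hclosed : IsClosed (LinearMap.range T : Set F) := Submodule.closed_of_finiteDimensional _
  obtain ⟨⟨_, x, rfl⟩, hx⟩ := (hg.comp continuous_subtype_val).exists_forall_le
    (hlim.comp hclosed.isClosedEmbedding_subtypeVal.tendsto_cocompact)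
  exact ⟨x, fun x' => hx ⟨T x', x', rfl⟩⟩

theorem tendsto_sum_apply_cocompact_atTop {ι : Type*} [Fintype ι] {X : ι → Type*}
    [∀ i, TopologicalSpace (X i)] {φ : ∀ i, X i → ℝ}
    (hφ : ∀ i, Tendsto (φ i) (cocompact (X i)) atTop) (hφ₀ : ∀ i x, 0 ≤ φ i x) :
    Tendsto (fun z : ∀ i, X i => ∑ i, φ i (z i)) (cocompact (∀ i, X i)) atTop := by
  rw [← coprodᵢ_cocompact, Filter.coprodᵢ, tendsto_iSup]
  exact fun i => tendsto_atTop_mono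
    (fun z => Finset.single_le_sum (fun j _ => hφ₀ j (z j)) (Finset.mem_univ i))
    ((hφ i).comp tendsto_comap)

theorem exists_mem_inner_map_eq_zero {E F : Type*} [AddCommGroup E] [Module ℝ E]
    [NormedAddCommGroup F] [InnerProductSpace ℝ F] (A : E →ₗ[ℝ] F) {L L' : Submodule ℝ E}
    [(L'.map A).HasOrthogonalProjection] (hLL' : L' ≤ L)
    (hinj : ∀ w ∈ L, A w = 0 → w = 0) (hne : ¬ L ≤ L') :
    ∃ v ∈ L, A v ≠ 0 ∧ ∀ w ∈ L', inner ℝ (A v) (A w) = 0 := by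
  obtain ⟨v₀, hv₀L, hv₀L'⟩ := SetLike.not_le_iff_exists.1 hne
  obtain ⟨w₀, hw₀L', hw₀⟩ := Submodule.mem_map.1 ((L'.map A).starProjection_apply_mem (A v₀))
  have hvL : v₀ - w₀ ∈ L := L.sub_mem hv₀L (hLL' hw₀L')
  refine ⟨v₀ - w₀, hvL, fun h => hv₀L' ?_, fun w hw => ?_⟩
  · rwa [sub_eq_zero.1 (hinj _ hvL h)]
  · rw [map_sub, hw₀]
    exact (L'.map A).starProjection_inner_eq_zero _ _ (Submodule.mem_map_of_mem hw)

theorem MeasureTheory.Measure.addHaar_setOf_dotProduct_eq {ι : Type*} [Fintype ι]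
    (μ : Measure (ι → ℝ)) [μ.IsAddHaarMeasure] {a : ι → ℝ} (ha : a ≠ 0) (c : ℝ) :
    μ {y | a ⬝ᵥ y = c} = 0 := by
  let H : AffineSubspace ℝ (ι → ℝ) :=
    { carrier := {y | a ⬝ᵥ y = c}
      smul_vsub_vadd_mem' := fun t y₁ y₂ y₃ (h₁ : _ = c) (h₂ : _ = c) (h₃ : _ = c) => by
        simp [vsub_eq_sub, vadd_eq_add, dotProduct_add, dotProduct_smul, dotProduct_sub,
          h₁, h₂, h₃] }
  refine Measure.addHaar_affineSubspace μ H fun hH => ?_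
  have haa : a ⬝ᵥ a ≠ 0 := fun h => ha (dotProduct_self_eq_zero.1 h)
  have : ((c + 1) / (a ⬝ᵥ a)) • a ∈ H := hH ▸ AffineSubspace.mem_top _ _ _
  change a ⬝ᵥ _ = c at this
  rw [dotProduct_smul, smul_eq_mul, div_mul_cancel₀ _ haa] at this
  linarith

section GeneralizedLasso

variable {n p m : ℕ} {y : Fin n → ℝ} {X : Matrix (Fin n) (Fin p) ℝ}
  {D : Matrix (Fin m) (Fin p) ℝ} {lam : ℝ} {β : Fin p → ℝ}

theorem exists_isGLSol (hlam : 0 < lam) : ∃ β, IsGLSol n p m y X D lam β := by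
  set φ : Fin n ⊕ Fin m → ℝ → ℝ := Sum.elim (fun i t => 1 / 2 * (y i - t) ^ 2) fun _ t => lam * |t|
  have hcrit : ∀ β, glCrit n p m y X D lam β = ∑ k, φ k ((fromRows X D *ᵥ β) k) := by
    intro β
    simp [glCrit, φ, fromRows_mulVec, Fintype.sum_sum_type, Finset.mul_sum]
  have hcont : ∀ k, Continuous (φ k) := by
    rintro (i | j) <;> simp only [φ, Sum.elim_inl, Sum.elim_inr] <;> fun_prop
  have hlim : ∀ k, Tendsto (φ k) (cocompact ℝ) atTop := by
    rintro (i | j) <;> simp only [φ, Sum.elim_inl, Sum.elim_inr]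
    · have := ((tendsto_pow_atTop two_ne_zero).comp (tendsto_dist_right_cocompact_atTop (y i)))
      simpa [Function.comp_def, Real.dist_eq, sq_abs, sub_sq_comm] using
        this.const_mul_atTop (by norm_num : (0 : ℝ) < 1 / 2)
    · simpa using (tendsto_norm_cocompact_atTop (E := ℝ)).const_mul_atTop hlam
  have hφ₀ : ∀ k t, 0 ≤ φ k t := by
    rintro (i | j) t <;> simp only [φ, Sum.elim_inl, Sum.elim_inr] <;> positivity
  obtain ⟨β, hβ⟩ := (fromRows X D).mulVecLin.exists_forall_le_comp
    (continuous_finsetSum _ fun k _ => (hcont k).comp (continuous_apply k))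
    (tendsto_sum_apply_cocompact_atTop hlim hφ₀)
  exact ⟨β, fun β' => by simpa only [hcrit, Function.comp_def, mulVecLin_apply] using hβ β'⟩

theorem glCrit_add_smul (β v : Fin p → ℝ) (t : ℝ) :
    glCrit n p m y X D lam (β + t • v) = glCrit n p m y X D lam β
      - t * ((y - X *ᵥ β) ⬝ᵥ X *ᵥ v) + t ^ 2 / 2 * (X *ᵥ v ⬝ᵥ X *ᵥ v)
      + lam * (∑ i, |(D *ᵥ β) i + t * (D *ᵥ v) i| - ∑ i, |(D *ᵥ β) i|) := by
  have hloss : ∑ i, (y i - (X *ᵥ (β + t • v)) i) ^ 2 = ∑ i, (y i - (X *ᵥ β) i) ^ 2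
      - 2 * t * ((y - X *ᵥ β) ⬝ᵥ X *ᵥ v) + t ^ 2 * (X *ᵥ v ⬝ᵥ X *ᵥ v) := by
    simp only [dotProduct, Finset.mul_sum, ← Finset.sum_sub_distrib, ← Finset.sum_add_distrib]
    refine Finset.sum_congr rfl fun i _ => ?_
    simp only [mulVec_add, mulVec_smul, Pi.add_apply, Pi.smul_apply, Pi.sub_apply, smul_eq_mul]
    ring
  rw [glCrit, glCrit, hloss]
  simp only [mulVec_add, mulVec_smul, Pi.add_apply, Pi.smul_apply, smul_eq_mul]
  ring

theorem IsGLSol.dotProduct_le (hβ : IsGLSol n p m y X D lam β) (v : Fin p → ℝ) :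
    (y - X *ᵥ β) ⬝ᵥ X *ᵥ v ≤ lam * l1DirectionalDeriv (D *ᵥ β) (D *ᵥ v) := by
  set a := X *ᵥ v ⬝ᵥ X *ᵥ v
  have hev : ∀ᶠ t in 𝓝[>] (0 : ℝ),
      (y - X *ᵥ β) ⬝ᵥ X *ᵥ v ≤ t / 2 * a + lam * l1DirectionalDeriv (D *ᵥ β) (D *ᵥ v) := by
    filter_upwards [eventually_sum_abs_add_smul_eq (D *ᵥ β) (D *ᵥ v), self_mem_nhdsWithin]
      with t ht (htpos : 0 < t)
    have hmin := hβ (β + t • v)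
    rw [glCrit_add_smul, ht] at hmin
    refine le_of_mul_le_mul_left ?_ htpos
    linarith
  have hlim : Tendsto (fun t => t / 2 * a + lam * l1DirectionalDeriv (D *ᵥ β) (D *ᵥ v))
      (𝓝[>] 0) (𝓝 (lam * l1DirectionalDeriv (D *ᵥ β) (D *ᵥ v))) := by
    refine Tendsto.mono_left ?_ nhdsWithin_le_nhds
    exact Continuous.tendsto' (by fun_prop) _ _ (by simp)
  exact ge_of_tendsto hlim hev

theorem IsGLSol.exists_kkt (hβ : IsGLSol n p m y X D lam β) :
    ∃ γ ∈ l1Subdifferential (D *ᵥ β), Xᵀ *ᵥ (y - X *ᵥ β) = lam • Dᵀ *ᵥ γ := by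
  set S := (lam • (Dᵀ).mulVecLin) '' l1Subdifferential (D *ᵥ β)
  have hconv : Convex ℝ S := (convex_l1Subdifferential _).linear_image _
  have hclosed : IsClosed S :=
    ((isCompact_l1Subdifferential _).image (LinearMap.continuous_of_finiteDimensional _)).isClosed
  suffices Xᵀ *ᵥ (y - X *ᵥ β) ∈ S by
    obtain ⟨γ, hγ, h⟩ := this
    exact ⟨γ, hγ, h.symm⟩
  rw [← iInter_halfSpaces_eq hconv hclosed, mem_iInter]
  intro f
  obtain ⟨v, hv⟩ := (dotProductEquiv ℝ (Fin p)).surjective f.toLinearMap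
  have hf (x : Fin p → ℝ) : f x = v ⬝ᵥ x := (LinearMap.congr_fun hv x).symm
  obtain ⟨γ, hγ, hγv⟩ := exists_mem_l1Subdifferential_dotProduct_eq (D *ᵥ β) (D *ᵥ v)
  refine ⟨_, mem_image_of_mem _ hγ, ?_⟩
  simp only [hf, LinearMap.smul_apply, mulVecLin_apply, dotProduct_smul,
    dotProduct_transpose_mulVec, hγv, smul_eq_mul]
  exact hβ.dotProduct_le v

theorem isOptSubgrad_iff {γ : Fin m → ℝ} :
    IsOptSubgrad n p m y X D lam γ ↔ ∃ β, IsGLSol n p m y X D lam β ∧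
      Xᵀ *ᵥ (y - X *ᵥ β) = lam • Dᵀ *ᵥ γ ∧ γ ∈ l1Subdifferential (D *ᵥ β) := by
  simp only [IsOptSubgrad, mem_l1Subdifferential]

theorem IsOptSubgrad.abs_le_one {γ : Fin m → ℝ} (hγ : IsOptSubgrad n p m y X D lam γ)
    (i : Fin m) : |γ i| ≤ 1 := by
  obtain ⟨β, -, -, hγβ⟩ := isOptSubgrad_iff.1 hγ
  exact abs_le_one_of_mem_l1Subdifferential hγβ i

theorem IsGLSol.mulVec_eq (hlam : 0 ≤ lam) {β₁ β₂ : Fin p → ℝ}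
    (h₁ : IsGLSol n p m y X D lam β₁) (h₂ : IsGLSol n p m y X D lam β₂) :
    X *ᵥ β₁ = X *ᵥ β₂ := by
  set mid := (1 / 2 : ℝ) • (β₁ + β₂)
  set gap := ∑ i, ((X *ᵥ β₁) i - (X *ᵥ β₂) i) ^ 2
  have hloss : ∑ i, (y i - (X *ᵥ mid) i) ^ 2 = 1 / 2 * ∑ i, (y i - (X *ᵥ β₁) i) ^ 2
      + 1 / 2 * ∑ i, (y i - (X *ᵥ β₂) i) ^ 2 - 1 / 4 * gap := by
    simp only [gap, Finset.mul_sum, ← Finset.sum_add_distrib, ← Finset.sum_sub_distrib]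
    refine Finset.sum_congr rfl fun i _ => ?_
    simp only [mid, mulVec_smul, mulVec_add, Pi.smul_apply, Pi.add_apply, smul_eq_mul]
    ring
  have hpen : ∑ i, |(D *ᵥ mid) i|
      ≤ 1 / 2 * ∑ i, |(D *ᵥ β₁) i| + 1 / 2 * ∑ i, |(D *ᵥ β₂) i| := by
    simp only [Finset.mul_sum, ← Finset.sum_add_distrib]
    refine Finset.sum_le_sum fun i _ => ?_
    simp only [mid, mulVec_smul, mulVec_add, Pi.smul_apply, Pi.add_apply, smul_eq_mul]
    have := abs_add_le ((D *ᵥ β₁) i) ((D *ᵥ β₂) i)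
    rw [abs_mul, abs_of_pos (by norm_num : (0 : ℝ) < 1 / 2)]
    linarith
  have hgap : gap = 0 := by
    refine le_antisymm ?_ (Finset.sum_nonneg fun i _ => sq_nonneg _)
    have := mul_le_mul_of_nonneg_left hpen hlam
    have h₂₁ := h₂ β₁
    have h₁mid := h₁ mid
    simp only [glCrit, hloss] at h₂₁ h₁mid
    linarith
  funext i
  have := (Finset.sum_eq_zero_iff_of_nonneg fun i _ => sq_nonneg _).1 hgap i (Finset.mem_univ i)
  exact sub_eq_zero.1 (pow_eq_zero_iff two_ne_zero |>.1 this)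

theorem IsGLSol.sum_abs_eq (hlam : 0 < lam) {β₁ β₂ : Fin p → ℝ}
    (h₁ : IsGLSol n p m y X D lam β₁) (h₂ : IsGLSol n p m y X D lam β₂) :
    ∑ i, |(D *ᵥ β₁) i| = ∑ i, |(D *ᵥ β₂) i| := by
  have hcrit := le_antisymm (h₁ β₂) (h₂ β₁)
  rw [glCrit, glCrit, h₁.mulVec_eq hlam.le h₂] at hcrit
  exact mul_left_cancel₀ hlam.ne' (by linarith)

theorem IsGLSol.isOptSubgrad_iff_kkt (hlam : 0 < lam) (hβ : IsGLSol n p m y X D lam β)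
    {γ : Fin m → ℝ} :
    IsOptSubgrad n p m y X D lam γ ↔
      Xᵀ *ᵥ (y - X *ᵥ β) = lam • Dᵀ *ᵥ γ ∧ γ ∈ l1Subdifferential (D *ᵥ β) := by
  refine ⟨fun hγ => ?_, fun h => isOptSubgrad_iff.2 ⟨β, hβ, h⟩⟩
  obtain ⟨β₀, hβ₀, hkkt, hγβ₀⟩ := isOptSubgrad_iff.1 hγ
  have hfit := hβ.mulVec_eq hlam.le hβ₀
  have hdot (w : Fin p → ℝ) : (y - X *ᵥ β₀) ⬝ᵥ X *ᵥ w = lam * (γ ⬝ᵥ D *ᵥ w) := by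
    rw [← dotProduct_transpose_mulVec, dotProduct_comm, hkkt, smul_dotProduct,
      dotProduct_comm, dotProduct_transpose_mulVec, smul_eq_mul]
  refine ⟨hfit ▸ hkkt, mem_l1Subdifferential_of_dotProduct_eq
    (abs_le_one_of_mem_l1Subdifferential hγβ₀) (mul_left_cancel₀ hlam.ne' ?_)⟩
  rw [← hdot, hfit, hdot, dotProduct_eq_sum_abs_of_mem_l1Subdifferential hγβ₀,
    hβ.sum_abs_eq hlam hβ₀]

theorem IsGLSol.mem_nullDminus (hlam : 0 < lam) (hβ : IsGLSol n p m y X D lam β)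
    {γ : Fin m → ℝ} (hγ : IsOptSubgrad n p m y X D lam γ) :
    β ∈ nullDminus m p D (boundarySet m γ) := fun i hi => by
  by_contra h
  refine hi ?_
  rw [boundarySet, mem_ofPred_eq,
    (mem_l1Subdifferential.1 ((hβ.isOptSubgrad_iff_kkt hlam).1 hγ).2 i).1 h]
  exact Real.abs_sign_of_ne_zero h

theorem convex_setOf_isOptSubgrad (hlam : 0 < lam) :
    Convex ℝ {γ | IsOptSubgrad n p m y X D lam γ} := by
  intro γ₁ h₁ γ₂ h₂ a b ha hb hab
  obtain ⟨β, hβ, -⟩ := isOptSubgrad_iff.1 h₁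
  rw [mem_ofPred_eq, hβ.isOptSubgrad_iff_kkt hlam] at h₁ h₂ ⊢
  refine ⟨?_, convex_l1Subdifferential _ h₁.2 h₂.2 ha hb hab⟩
  rw [mulVec_add, mulVec_smul, mulVec_smul, smul_add, smul_comm lam a, smul_comm lam b,
    ← h₁.1, ← h₂.1, ← add_smul, hab, one_smul]

theorem boundarySet_add_subset {γ₁ γ₂ : Fin m → ℝ} (h₁ : ∀ i, |γ₁ i| ≤ 1)
    (h₂ : ∀ i, |γ₂ i| ≤ 1) {a b : ℝ} (ha : 0 < a) (hb : 0 < b) (hab : a + b = 1) :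
    boundarySet m (a • γ₁ + b • γ₂) ⊆ boundarySet m γ₁ ∩ boundarySet m γ₂ := by
  intro i hi
  have := abs_add_le (a * γ₁ i) (b * γ₂ i)
  simp only [boundarySet, mem_ofPred_eq, Pi.add_apply, Pi.smul_apply, smul_eq_mul,
    abs_mul, abs_of_pos ha, abs_of_pos hb, mem_inter_iff] at hi this ⊢
  constructor <;> nlinarith [h₁ i, h₂ i]

def nullDminusSubmodule (D : Matrix (Fin m) (Fin p) ℝ) (B : Set (Fin m)) :
    Submodule ℝ (Fin p → ℝ) where
  carrier := nullDminus m p D B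
  add_mem' ha hb i hi := by rw [mulVec_add, Pi.add_apply, ha i hi, hb i hi, add_zero]
  zero_mem' i _ := by rw [mulVec_zero, Pi.zero_apply]
  smul_mem' c _ hx i hi := by rw [mulVec_smul, Pi.smul_apply, hx i hi, smul_zero]

theorem nullDminus_mono {B B' : Set (Fin m)} (h : B' ⊆ B) :
    nullDminus m p D B' ⊆ nullDminus m p D B :=
  fun _ hβ i hi => hβ i fun hi' => hi (h hi')

theorem existsUnique_isGLSol (hlam : 0 < lam)
    (hrank : ∀ γ, IsOptSubgrad n p m y X D lam γ →
      ∀ β, X *ᵥ β = 0 → β ∈ nullDminus m p D (boundarySet m γ) → β = 0) :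
    ∃! β, IsGLSol n p m y X D lam β := by
  obtain ⟨β₀, hβ₀⟩ := exists_isGLSol (y := y) (X := X) (D := D) hlam
  obtain ⟨γ, hγβ₀, hkkt⟩ := hβ₀.exists_kkt
  have hγ : IsOptSubgrad n p m y X D lam γ := isOptSubgrad_iff.2 ⟨β₀, hβ₀, hkkt, hγβ₀⟩
  refine ⟨β₀, hβ₀, fun β hβ => sub_eq_zero.1 (hrank γ hγ _ ?_ ?_)⟩
  · rw [mulVec_sub, hβ.mulVec_eq hlam.le hβ₀, sub_self]
  · exact (nullDminusSubmodule D _).sub_mem (hβ.mem_nullDminus hlam hγ)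
      (hβ₀.mem_nullDminus hlam hγ)

theorem exists_mem_nullDminus_dotProduct_mulVec_eq_zero {B B' : Set (Fin m)} (hB' : B' ⊆ B)
    (hrank : ∀ w, X *ᵥ w = 0 → w ∈ nullDminus m p D B → w = 0)
    (hne : ¬ nullDminus m p D B ⊆ nullDminus m p D B') :
    ∃ v ∈ nullDminus m p D B, X *ᵥ v ≠ 0 ∧ ∀ w ∈ nullDminus m p D B', X *ᵥ v ⬝ᵥ X *ᵥ w = 0 := by
  let A := (WithLp.linearEquiv 2 ℝ (Fin n → ℝ)).symm.toLinearMap ∘ₗ X.mulVecLin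
  obtain ⟨v, hv, hAv, horth⟩ := exists_mem_inner_map_eq_zero A
    (L := nullDminusSubmodule D B) (L' := nullDminusSubmodule D B') (nullDminus_mono hB')
    (fun w hw hAw => hrank w (by simpa [A] using hAw) hw) hne
  refine ⟨v, hv, fun h => hAv (by simp [A, h]), fun w hw => ?_⟩
  simpa [A, EuclideanSpace.inner_toLp_toLp, dotProduct_comm] using horth w hw

variable (X D lam) in
theorem exists_volume_null_forall_nullDminus_eq :
    ∃ N : Set (Fin n → ℝ), volume N = 0 ∧ ∀ y ∉ N, ∀ (β : Fin p → ℝ) (γ : Fin m → ℝ)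
      (B' : Set (Fin m)), Xᵀ *ᵥ (y - X *ᵥ β) = lam • Dᵀ *ᵥ γ → β ∈ nullDminus m p D B' →
      B' ⊆ boundarySet m γ →
      (∀ w, X *ᵥ w = 0 → w ∈ nullDminus m p D (boundarySet m γ) → w = 0) →
      nullDminus m p D (boundarySet m γ) = nullDminus m p D B' := by
  choose! v hvB hvX hvorth using fun B B' : Set (Fin m) =>
    exists_mem_nullDminus_dotProduct_mulVec_eq_zero (X := X) (D := D) (B := B) (B' := B')
  refine ⟨⋃ (B : Set (Fin m)) (B' : Set (Fin m)) (s : Fin m → SignType),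
    {y | X *ᵥ v B B' ≠ 0 ∧ X *ᵥ v B B' ⬝ᵥ y = lam * ∑ i, s i * (D *ᵥ v B B') i}, ?_, ?_⟩
  · refine measure_iUnion_null fun B => measure_iUnion_null fun B' =>
      measure_iUnion_null fun s => ?_
    by_cases h : X *ᵥ v B B' = 0
    · simp [h]
    · exact measure_mono_null (fun y hy => hy.2) (Measure.addHaar_setOf_dotProduct_eq _ h _)
  intro y hy β γ B' hkkt hβ hB' hrank
  by_contra hne
  have hnsub : ¬ nullDminus m p D (boundarySet m γ) ⊆ nullDminus m p D B' :=
    fun h => hne (h.antisymm (nullDminus_mono hB'))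
  set v := v (boundarySet m γ) B'
  refine hy (mem_iUnion₂.2 ⟨boundarySet m γ, B', mem_iUnion.2
    ⟨fun i => SignType.sign (γ i), hvX _ _ hB' hrank hnsub, ?_⟩⟩)
  have hγv : ∀ i, γ i * (D *ᵥ v) i = SignType.sign (γ i) * (D *ᵥ v) i := fun i => by
    by_cases hi : i ∈ boundarySet m γ
    · conv_lhs => rw [← sign_mul_abs (γ i), show |γ i| = 1 from hi, mul_one]
    · rw [hvB _ _ hB' hrank hnsub i hi, mul_zero, mul_zero]
  calc X *ᵥ v ⬝ᵥ y = X *ᵥ v ⬝ᵥ (y - X *ᵥ β) := by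
        rw [dotProduct_sub, hvorth _ _ hB' hrank hnsub β hβ, sub_zero]
    _ = lam * ∑ i, SignType.sign (γ i) * (D *ᵥ v) i := by
        rw [dotProduct_comm, ← dotProduct_transpose_mulVec, hkkt, dotProduct_smul,
          dotProduct_transpose_mulVec, smul_eq_mul]
        simp only [dotProduct, hγv]

end GeneralizedLasso

open MeasureTheory in
theorem generalized_lasso_rank_condition_implies_invariance_and_uniqueness_ae
    (n p m : ℕ) (X : Matrix (Fin n) (Fin p) ℝ)
    (D : Matrix (Fin m) (Fin p) ℝ) (lam : ℝ) (hlam : 0 < lam) :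
    ∃ N : Set (Fin n → ℝ), volume N = 0 ∧
      ∀ y : Fin n → ℝ, y ∉ N →
        (∀ γ : Fin m → ℝ, IsOptSubgrad n p m y X D lam γ →
          ∀ β : Fin p → ℝ, X.mulVec β = 0 →
            β ∈ nullDminus m p D (boundarySet m γ) → β = 0) →
        ((∀ γ₁ γ₂ : Fin m → ℝ, IsOptSubgrad n p m y X D lam γ₁ →
            IsOptSubgrad n p m y X D lam γ₂ →
            nullDminus m p D (boundarySet m γ₁) = nullDminus m p D (boundarySet m γ₂)) ∧
          ∃! β : Fin p → ℝ, IsGLSol n p m y X D lam β) := by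
  obtain ⟨N, hN, hgeneric⟩ := exists_volume_null_forall_nullDminus_eq X D lam
  refine ⟨N, hN, fun y hy hrank => ?_⟩
  obtain ⟨β, hβ, huniq⟩ := existsUnique_isGLSol hlam hrank
  refine ⟨fun γ₁ γ₂ h₁ h₂ => ?_, β, hβ, huniq⟩
  set γ : Fin m → ℝ := (1 / 2 : ℝ) • γ₁ + (1 / 2 : ℝ) • γ₂
  have hγ : IsOptSubgrad n p m y X D lam γ :=
    convex_setOf_isOptSubgrad hlam h₁ h₂ (by norm_num) (by norm_num) (by norm_num)
  have hsub : boundarySet m γ ⊆ boundarySet m γ₁ ∩ boundarySet m γ₂ :=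
    boundarySet_add_subset h₁.abs_le_one h₂.abs_le_one (by norm_num) (by norm_num) (by norm_num)
  have key : ∀ γ', IsOptSubgrad n p m y X D lam γ' → boundarySet m γ ⊆ boundarySet m γ' →
      nullDminus m p D (boundarySet m γ') = nullDminus m p D (boundarySet m γ) :=
    fun γ' hγ' hsub' => hgeneric y hy β γ' _ ((hβ.isOptSubgrad_iff_kkt hlam).1 hγ').1
      (hβ.mem_nullDminus hlam hγ) hsub' (hrank γ' hγ')
  exact (key γ₁ h₁ (hsub.trans inter_subset_left)).trans
    (key γ₂ h₂ (hsub.trans inter_subset_right)).symm
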